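/- Let ỹ ∈ ℝ^p and λ₁ ≥ … ≥ λ_p > 0. Any minimizer β̂ of b ↦ ½‖ỹ − b‖₂² + Σᵢ λᵢ |b|₍ᵢ₎ satisfies: each β̂ᵢ has the same sign as ỹᵢ (or is zero), and |β̂ᵢ| ≥ |β̂ⱼ| whenever |ỹᵢ| ≥ |ỹⱼ|; i.e., the prox of the sorted ℓ₁ norm preserves signs and the ordering of magnitudes. -/

import Mathlib

/-!
For antitone `λ ≥ 0`, the sorted ℓ₁ norm `J` is the maximum over permutations `σ` of
`∑ᵢ λᵢ |b_{σ i}|` (rearrangement inequality), hence convex; it is also invariant under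
permutations and sign changes of the coordinates. Flipping a sign or swapping two magnitudes of `b`
therefore changes neither `J b` nor `‖b‖²`, so the prox objective `½‖y - b‖² + J b` only changes
through `-⟨y, b⟩`. Flipping a coordinate of `β̂` whose sign disagrees with `y` strictly decreases the
objective. Swapping the magnitudes of `β̂ᵢ, β̂ⱼ` when they are ordered against `|yᵢ|, |yⱼ|` does not
increase it, so by strict convexity the swapped vector is `β̂` itself and the magnitudes agree.
-/

/-- The `i`-th largest absolute value among the coordinates of `b`. -/
noncomputable def sortedAbs {p : ℕ} (b : Fin p → ℝ) (i : Fin p) : ℝ :=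
  |b (Tuple.sort (fun j => |b j|) i.rev)|

/-- The sorted ℓ₁ norm `J_λ(b) = ∑ᵢ λᵢ |b|₍ᵢ₎`. -/
noncomputable def sortedL1 {p : ℕ} (lam b : Fin p → ℝ) : ℝ :=
  ∑ i, lam i * sortedAbs b i

open Finset Set

section Prox

variable {ι : Type*} [Fintype ι]

noncomputable def proxObjective (J : (ι → ℝ) → ℝ) (y b : ι → ℝ) : ℝ :=
  1 / 2 * ∑ i, (y i - b i) ^ 2 + J b

def IsSignPermInvariant (J : (ι → ℝ) → ℝ) : Prop :=
  ∀ (b c : ι → ℝ) (σ : Equiv.Perm ι), (∀ k, |b k| = |c (σ k)|) → J b = J c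

lemma strictConvexOn_sum_sq_sub (y : ι → ℝ) :
    StrictConvexOn ℝ univ fun b : ι → ℝ => ∑ i, (y i - b i) ^ 2 := by
  refine ⟨convex_univ, fun x _ z _ hxz a b ha hb hab => ?_⟩
  have hgap : ∀ i, (y i - (a * x i + b * z i)) ^ 2
      = a * (y i - x i) ^ 2 + b * (y i - z i) ^ 2 - a * b * (x i - z i) ^ 2 := by
    obtain rfl : b = 1 - a := by linarith
    intro i; ring
  have hpos : 0 < ∑ i, (x i - z i) ^ 2 := by
    obtain ⟨i, hi⟩ := Function.ne_iff.mp hxz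
    exact sum_pos' (fun k _ => sq_nonneg _) ⟨i, mem_univ i, sq_pos_iff.2 (sub_ne_zero.2 hi)⟩
  simp only [smul_eq_mul, Pi.add_apply, Pi.smul_apply, hgap, sum_sub_distrib, sum_add_distrib,
    ← mul_sum]
  nlinarith [mul_pos (mul_pos ha hb) hpos]

lemma strictConvexOn_proxObjective {J : (ι → ℝ) → ℝ} (hJ : ConvexOn ℝ univ J) (y : ι → ℝ) :
    StrictConvexOn ℝ univ (proxObjective J y) := by
  refine ⟨convex_univ, fun x _ z _ hxz a b ha hb hab => ?_⟩
  have hq := (strictConvexOn_sum_sq_sub y).2 (mem_univ x) (mem_univ z) hxz ha hb hab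
  have hJ' := hJ.2 (mem_univ x) (mem_univ z) ha.le hb.le hab
  simp only [proxObjective, smul_eq_mul] at *
  linarith

lemma exists_abs_eq_and_mul_eq (y : ℝ) {r : ℝ} (hr : 0 ≤ r) : ∃ x, |x| = r ∧ y * x = |y| * r := by
  rcases le_total 0 y with hy | hy
  · exact ⟨r, abs_of_nonneg hr, by rw [abs_of_nonneg hy]⟩
  · exact ⟨-r, by rw [abs_neg, abs_of_nonneg hr], by rw [abs_of_nonpos hy]; ring⟩

namespace IsSignPermInvariant

variable {J : (ι → ℝ) → ℝ} (hJ : IsSignPermInvariant J)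
include hJ

lemma proxObjective_sub (y : ι → ℝ) {b c : ι → ℝ} (σ : Equiv.Perm ι)
    (h : ∀ k, |b k| = |c (σ k)|) :
    proxObjective J y b - proxObjective J y c = ∑ k, y k * c k - ∑ k, y k * b k := by
  have hsq : ∑ k, b k ^ 2 = ∑ k, c k ^ 2 :=
    calc ∑ k, b k ^ 2 = ∑ k, c (σ k) ^ 2 := sum_congr rfl fun k _ => by rw [← sq_abs, h k, sq_abs]
      _ = ∑ k, c k ^ 2 := Equiv.sum_comp σ (fun k => c k ^ 2)
  have hexp : ∀ d : ι → ℝ,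
      ∑ k, (y k - d k) ^ 2 = ∑ k, y k ^ 2 - 2 * ∑ k, y k * d k + ∑ k, d k ^ 2 := by
    intro d; simp only [sub_sq, sum_add_distrib, sum_sub_distrib, mul_sum, mul_assoc]
  rw [proxObjective, proxObjective, hexp, hexp, hsq, hJ b c σ h]; ring

lemma mul_nonneg_of_isMinOn {y β : ι → ℝ} (hmin : IsMinOn (proxObjective J y) univ β) (i : ι) :
    0 ≤ β i * y i := by
  classical
  by_contra! hneg
  set b := β + Pi.single i (-2 * β i)
  have hbi : b i = -β i := by simp [b]; ring
  have hflip : ∀ k, |b k| = |β (Equiv.refl ι k)| := by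
    intro k
    rcases eq_or_ne k i with rfl | hki
    · rw [hbi, abs_neg, Equiv.refl_apply]
    · simp [b, hki]
  have hlin : ∑ k, y k * b k = ∑ k, y k * β k - 2 * (β i * y i) := by
    simp [b, mul_add, sum_add_distrib, Pi.single_apply]; ring
  have hdiff := hJ.proxObjective_sub y _ hflip
  have hβb : proxObjective J y β ≤ proxObjective J y b := hmin (mem_univ b)
  linarith

lemma abs_le_abs_of_isMinOn (hconv : ConvexOn ℝ univ J) {y β : ι → ℝ}
    (hmin : IsMinOn (proxObjective J y) univ β) {i j : ι} (hy : |y j| ≤ |y i|) :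
    |β j| ≤ |β i| := by
  classical
  by_contra! hlt
  have hij : i ≠ j := by rintro rfl; exact lt_irrefl _ hlt
  obtain ⟨u, hu, hyu⟩ := exists_abs_eq_and_mul_eq (y i) (abs_nonneg (β j))
  obtain ⟨v, hv, hyv⟩ := exists_abs_eq_and_mul_eq (y j) (abs_nonneg (β i))
  set b := β + Pi.single i (u - β i) + Pi.single j (v - β j)
  have hbi : b i = u := by simp [b, hij]
  have hswap : ∀ k, |b k| = |β (Equiv.swap i j k)| := by
    intro k
    rcases eq_or_ne k i with rfl | hki
    · simp [b, hij, hu]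
    rcases eq_or_ne k j with rfl | hkj
    · simp [b, hki, hv]
    · simp [b, hki, hkj, Equiv.swap_apply_of_ne_of_ne]
  have hlin : ∑ k, y k * b k
      = ∑ k, y k * β k + (y i * u - y i * β i) + (y j * v - y j * β j) := by
    simp [b, mul_add, sum_add_distrib, Pi.single_apply]; ring
  have haligned : ∀ k, y k * β k = |y k| * |β k| := fun k => by
    rw [← abs_mul, abs_of_nonneg (by rw [mul_comm]; exact hJ.mul_nonneg_of_isMinOn hmin k)]
  have hle : proxObjective J y b ≤ proxObjective J y β := by
    have hdiff := hJ.proxObjective_sub y _ hswap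
    nlinarith [haligned i, haligned j, mul_nonneg (sub_nonneg.2 hy) (sub_nonneg.2 hlt.le)]
  have hb : b = β := (strictConvexOn_proxObjective hconv y).eq_of_isMinOn
    (isMinOn_univ_iff.2 fun c => hle.trans (hmin (mem_univ c))) hmin (mem_univ b) (mem_univ β)
  exact hlt.ne (by rw [← hu, ← hbi, hb])

end IsSignPermInvariant

end Prox

section SortedL1

variable {p : ℕ}

lemma exists_perm_sortedL1_eq (lam b : Fin p → ℝ) :
    ∃ σ : Equiv.Perm (Fin p), sortedL1 lam b = ∑ i, lam i * |b (σ i)| :=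
  ⟨Fin.revPerm.trans (Tuple.sort fun k => |b k|), rfl⟩

lemma sum_mul_abs_comp_perm_le_sortedL1 {lam : Fin p → ℝ} (hlam : Antitone lam)
    (b : Fin p → ℝ) (σ : Equiv.Perm (Fin p)) :
    ∑ i, lam i * |b (σ i)| ≤ sortedL1 lam b := by
  have hsorted : Antitone (sortedAbs b) := fun i i' h =>
    Tuple.monotone_sort (fun k => |b k|) (Fin.rev_le_rev.2 h)
  let τ := σ.trans ((Tuple.sort fun k => |b k|).symm.trans Fin.revPerm.symm)
  calc ∑ i, lam i * |b (σ i)| = ∑ i, lam i * sortedAbs b (τ i) := by simp [sortedAbs, τ]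
    _ ≤ ∑ i, lam i * sortedAbs b i := (hlam.monovary hsorted).sum_mul_comp_perm_le_sum_mul
    _ = sortedL1 lam b := rfl

lemma convexOn_sortedL1 {lam : Fin p → ℝ} (hlam : Antitone lam) (hnonneg : ∀ i, 0 ≤ lam i) :
    ConvexOn ℝ univ (sortedL1 lam) := by
  refine ⟨convex_univ, fun x _ z _ a b ha hb _ => ?_⟩
  obtain ⟨σ, hσ⟩ := exists_perm_sortedL1_eq lam (a • x + b • z)
  calc sortedL1 lam (a • x + b • z) = ∑ i, lam i * |a * x (σ i) + b * z (σ i)| := hσ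
    _ ≤ ∑ i, (a * (lam i * |x (σ i)|) + b * (lam i * |z (σ i)|)) := sum_le_sum fun i _ => by
        have := abs_add_le (a * x (σ i)) (b * z (σ i))
        rw [abs_mul, abs_mul, abs_of_nonneg ha, abs_of_nonneg hb] at this
        nlinarith [hnonneg i]
    _ = a * ∑ i, lam i * |x (σ i)| + b * ∑ i, lam i * |z (σ i)| := by
        rw [sum_add_distrib, mul_sum, mul_sum]
    _ ≤ a • sortedL1 lam x + b • sortedL1 lam z := by
        simp only [smul_eq_mul]
        gcongr <;> exact sum_mul_abs_comp_perm_le_sortedL1 hlam _ σ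

lemma isSignPermInvariant_sortedL1 (lam : Fin p → ℝ) : IsSignPermInvariant (sortedL1 lam) := by
  intro b c σ h
  have habs : (fun k => |b k|) = (fun k => |c k|) ∘ σ := funext h
  have : sortedAbs b = sortedAbs c := funext fun i => by
    have := congrFun (Tuple.comp_perm_comp_sort_eq_comp_sort (f := fun k => |c k|) (σ := σ)) i.rev
    rwa [← habs] at this
  simp only [sortedL1, this]

end SortedL1

/-- the prox of the sorted ℓ₁ norm preserves signs and the
ordering of magnitudes. -/
theorem slope_prox_sign_and_order {p : ℕ} (lam : Fin p → ℝ)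
    (hmono : Antitone lam) (hpos : ∀ i, 0 < lam i)
    (ytil : Fin p → ℝ) (βhat : Fin p → ℝ)
    (hmin : ∀ b : Fin p → ℝ,
      (1 / 2) * ∑ i, (ytil i - βhat i) ^ 2 + sortedL1 lam βhat ≤
      (1 / 2) * ∑ i, (ytil i - b i) ^ 2 + sortedL1 lam b) :
    (∀ i, 0 ≤ βhat i * ytil i) ∧
    (∀ i j : Fin p, |ytil j| ≤ |ytil i| → |βhat j| ≤ |βhat i|) := by
  have hJ := isSignPermInvariant_sortedL1 lam
  have hmin' : IsMinOn (proxObjective (sortedL1 lam) ytil) univ βhat := isMinOn_univ_iff.2 hmin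
  exact ⟨hJ.mul_nonneg_of_isMinOn hmin', fun i j =>
    hJ.abs_le_abs_of_isMinOn (convexOn_sortedL1 hmono fun i => (hpos i).le) hmin'⟩
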